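/- Let n, t_a, t_s be natural numbers with t_a ≤ t_s and t_a + 2·t_s < n, let V be any type, let C ⊆ Fin n be a finset with |C| ≤ t_a, and let e : Fin n → Finset V be a function such that (e i).card ≤ 1 for every i ∉ C (each honest party sends at most one echo message). Then there do not exist distinct values v ≠ v' in V such that both {i : Fin n | v ∈ e i} and {i : Fin n | v' ∈ e i} have cardinality at least n − t_s. (Two echo quorums of size n − t_s would have to share an honest party, since 2·(n − t_s) − t_a > n, but an honest party echoes at most one value; this is the key step in the t_a-consistency proof of Bracha's reliable broadcast Π_BB.) -/

import Mathlib

/-!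
Two echo quorums of size `n - t_s` overlap in more than `n - 2 t_s > t_a ≥ |C|` parties, so some
party in the overlap is honest; it echoed both values, while an honest party echoes at most one.
-/

open Finset

theorem Finset.exists_mem_inter_notMem_of_card_add_lt {α : Type*} [Fintype α] [DecidableEq α]
    {s t C : Finset α} (h : Fintype.card α + #C < #s + #t) : ∃ i ∈ s ∩ t, i ∉ C := by
  have hunion : #(s ∪ t) ≤ Fintype.card α := card_le_univ _
  have hinter : #C < #(s ∩ t) := by
    have := card_union_add_card_inter s t
    omega
  exact exists_mem_notMem_of_card_lt_card hinter

theorem stmt_1_general (n t_a t_s : ℕ) (hlt : t_a + 2 * t_s < n)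
    (V : Type*) [DecidableEq V] (C : Finset (Fin n)) (hC : C.card ≤ t_a)
    (e : Fin n → Finset V) (he : ∀ i ∉ C, (e i).card ≤ 1) :
    ¬ ∃ v v' : V, v ≠ v' ∧
      n - t_s ≤ (Finset.univ.filter (fun i : Fin n => v ∈ e i)).card ∧
      n - t_s ≤ (Finset.univ.filter (fun i : Fin n => v' ∈ e i)).card := by
  rintro ⟨v, v', hne, hv, hv'⟩
  obtain ⟨i, hi, hiC⟩ :=
    exists_mem_inter_notMem_of_card_add_lt (s := {i | v ∈ e i}) (t := {i | v' ∈ e i}) (C := C)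
      (by rw [Fintype.card_fin]; omega)
  rw [mem_inter, mem_filter, mem_filter] at hi
  exact hne (card_le_one.mp (he i hiC) v hi.1.2 v' hi.2.2)

/-- Two echo quorums of size `n - t_s` must share an honest party, but an
honest party echoes at most one value: key step of `t_a`-consistency of
Bracha's reliable broadcast. -/
theorem stmt_1 (n t_a t_s : ℕ) (hts : t_a ≤ t_s) (hlt : t_a + 2 * t_s < n)
    (V : Type*) [DecidableEq V] (C : Finset (Fin n)) (hC : C.card ≤ t_a)
    (e : Fin n → Finset V) (he : ∀ i ∉ C, (e i).card ≤ 1) :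
    ¬ ∃ v v' : V, v ≠ v' ∧
      n - t_s ≤ (Finset.univ.filter (fun i : Fin n => v ∈ e i)).card ∧
      n - t_s ≤ (Finset.univ.filter (fun i : Fin n => v' ∈ e i)).card :=
  stmt_1_general n t_a t_s hlt V C hC e he
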